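/- Let V, W, X be finite dimensional vector spaces over a field, ∂ : V → V linear with ∂² = 0, and linear maps Φ : V → W, Ψ : W → V, F : V → X, G : X → V, R : V → V satisfying Ψ∘Φ + G∘F = id_V + R∘∂ + ∂∘R. Then dim H(V,∂) ≤ dim W + dim X. -/

import Mathlib

/-!
A cycle `v` with `Φ v = 0` satisfies `v = -d (H v)` when `Ψ ∘ Φ = id + H ∘ d + d ∘ H`, so it is a
boundary and `Φ` induces an injection of the homology into `W`. The two maps `Φ`, `F` combine into
`V → W × X`, and `Ψ`, `G` into `W × X → V`, reducing the theorem to this case.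
-/

open LinearMap Module

theorem finrank_quotient_le_of_ker_le {K M W : Type*} [DivisionRing K]
    [AddCommGroup M] [Module K M] [AddCommGroup W] [Module K W] [FiniteDimensional K W]
    {N : Submodule K M} (T : M →ₗ[K] W) (hT : ker T ≤ N) :
    finrank K (M ⧸ N) ≤ finrank K W := by
  have : FiniteDimensional K (M ⧸ ker T) := .equiv T.quotKerEquivRange.symm
  calc finrank K (M ⧸ N) ≤ finrank K (M ⧸ ker T) :=
        finrank_le_finrank_of_surjective (Submodule.factor_surjective hT)
      _ = finrank K (range T) := T.quotKerEquivRange.finrank_eq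
      _ ≤ finrank K W := Submodule.finrank_le _

theorem mem_range_of_map_eq_zero_of_homotopy {R V W : Type*} [Ring R]
    [AddCommGroup V] [Module R V] [AddCommGroup W] [Module R W]
    {d H : V →ₗ[R] V} {Φ : V →ₗ[R] W} {Ψ : W →ₗ[R] V}
    (h : Ψ ∘ₗ Φ = LinearMap.id + H ∘ₗ d + d ∘ₗ H) {v : V} (hdv : d v = 0) (hΦv : Φ v = 0) :
    v ∈ range d := by
  have hv : 0 = v + d (H v) := by
    simpa [hdv, hΦv] using congr($h v)
  exact ⟨-H v, by rw [map_neg, neg_eq_iff_eq_neg, eq_neg_iff_add_eq_zero, add_comm, hv]⟩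

theorem finrank_homology_le_of_homotopy {K V W : Type*} [DivisionRing K]
    [AddCommGroup V] [Module K V] [AddCommGroup W] [Module K W] [FiniteDimensional K W]
    {d H : V →ₗ[K] V} {Φ : V →ₗ[K] W} {Ψ : W →ₗ[K] V}
    (h : Ψ ∘ₗ Φ = LinearMap.id + H ∘ₗ d + d ∘ₗ H) :
    finrank K (ker d ⧸ (range d).comap (ker d).subtype) ≤ finrank K W :=
  finrank_quotient_le_of_ker_le (Φ ∘ₗ (ker d).subtype) fun v hv =>
    mem_range_of_map_eq_zero_of_homotopy h v.2 hv

theorem homology_dim_le_add_general (K V W X : Type*) [Field K]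
    [AddCommGroup V] [Module K V]
    [AddCommGroup W] [Module K W] [FiniteDimensional K W]
    [AddCommGroup X] [Module K X] [FiniteDimensional K X]
    (d : V →ₗ[K] V)
    (Φ : V →ₗ[K] W) (Ψ : W →ₗ[K] V)
    (F : V →ₗ[K] X) (G : X →ₗ[K] V) (R : V →ₗ[K] V)
    (h : Ψ ∘ₗ Φ + G ∘ₗ F = LinearMap.id + R ∘ₗ d + d ∘ₗ R) :
    Module.finrank K
        (LinearMap.ker d ⧸ (LinearMap.range d).comap (LinearMap.ker d).subtype)
      ≤ Module.finrank K W + Module.finrank K X := by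
  rw [← finrank_prod]
  exact finrank_homology_le_of_homotopy (Ψ := Ψ.coprod G) (Φ := Φ.prod F)
    ((coprod_comp_prod Ψ G Φ F).trans h)

/-- If `Ψ∘Φ + G∘F = id + R∘d + d∘R` with `d² = 0`, then
`dim H(V,d) ≤ dim W + dim X`. -/
theorem homology_dim_le_add (K V W X : Type*) [Field K]
    [AddCommGroup V] [Module K V] [FiniteDimensional K V]
    [AddCommGroup W] [Module K W] [FiniteDimensional K W]
    [AddCommGroup X] [Module K X] [FiniteDimensional K X]
    (d : V →ₗ[K] V) (hd : d ∘ₗ d = 0)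
    (Φ : V →ₗ[K] W) (Ψ : W →ₗ[K] V)
    (F : V →ₗ[K] X) (G : X →ₗ[K] V) (R : V →ₗ[K] V)
    (h : Ψ ∘ₗ Φ + G ∘ₗ F = LinearMap.id + R ∘ₗ d + d ∘ₗ R) :
    Module.finrank K
        (LinearMap.ker d ⧸ (LinearMap.range d).comap (LinearMap.ker d).subtype)
      ≤ Module.finrank K W + Module.finrank K X :=
  homology_dim_le_add_general K V W X d Φ Ψ F G R h
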